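/- Each of the following 3-dimensional ℂ-algebras with basis e₁, e₂, e₃ (multiplication determined bilinearly, with all unlisted products of basis elements zero) satisfies all four Moufang identities: M³₀₂ with e₁e₁ = e₂; M³₀₃ with e₁e₂ = e₃, e₂e₁ = e₃; and M³₀₄ with e₁e₂ = e₃, e₂e₁ = −e₃. -/

import Mathlib

/-- The four Moufang identities for a binary multiplication `m` on an additive group. -/
def MoufangMulOn {B : Type*} [AddCommGroup B] (m : B → B → B) : Prop :=
  (∀ x y z, m (m x y) z - m x (m y z) = -(m (m z y) x - m z (m y x))) ∧
  (∀ x y z t, m (m (m x y) z) t + m (m (m z y) x) t = m x (m y (m z t)) + m z (m y (m x t))) ∧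
  (∀ x y z t, m t (m x (m y z)) + m t (m z (m y x)) = m (m (m t x) y) z + m (m (m t z) y) x) ∧
  (∀ x y z t, m (m x y) (m t z) + m (m z y) (m t x) = m (m x (m y t)) z + m (m z (m y t)) x)

/-- The multiplication of `M³₀₂` on `ℂ³`: `e₁e₁ = e₂`, all other products of basis vectors zero. -/
def m302mul (x y : Fin 3 → ℂ) : Fin 3 → ℂ := ![0, x 0 * y 0, 0]

/-- The multiplication of `M³₀₃` on `ℂ³`: `e₁e₂ = e₃`, `e₂e₁ = e₃`, all others zero. -/
def m303mul (x y : Fin 3 → ℂ) : Fin 3 → ℂ := ![0, 0, x 0 * y 1 + x 1 * y 0]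

/-- The multiplication of `M³₀₄` on `ℂ³`: `e₁e₂ = e₃`, `e₂e₁ = -e₃`, all others zero. -/
def m304mul (x y : Fin 3 → ℂ) : Fin 3 → ℂ := ![0, 0, x 0 * y 1 - x 1 * y 0]

/-! In each of these algebras every product of three elements vanishes, in either bracketing,
because all products lie in a line (`ℂ e₂` resp. `ℂ e₃`) that annihilates the whole algebra.
Every term of the four Moufang identities is such a product, so both sides are zero. -/

theorem MoufangMulOn.of_mul_mul_eq_zero {B : Type*} [AddCommGroup B] {m : B → B → B}
    (hl : ∀ x y z, m (m x y) z = 0) (hr : ∀ x y z, m x (m y z) = 0) : MoufangMulOn m :=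
  ⟨by grind, by grind, by grind, by grind⟩

theorem m302mul_mul_left (x y z : Fin 3 → ℂ) : m302mul (m302mul x y) z = 0 := by
  ext i; fin_cases i <;> simp [m302mul]

theorem m302mul_mul_right (x y z : Fin 3 → ℂ) : m302mul x (m302mul y z) = 0 := by
  ext i; fin_cases i <;> simp [m302mul]

theorem m303mul_mul_left (x y z : Fin 3 → ℂ) : m303mul (m303mul x y) z = 0 := by
  ext i; fin_cases i <;> simp [m303mul]

theorem m303mul_mul_right (x y z : Fin 3 → ℂ) : m303mul x (m303mul y z) = 0 := by
  ext i; fin_cases i <;> simp [m303mul]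

theorem m304mul_mul_left (x y z : Fin 3 → ℂ) : m304mul (m304mul x y) z = 0 := by
  ext i; fin_cases i <;> simp [m304mul]

theorem m304mul_mul_right (x y z : Fin 3 → ℂ) : m304mul x (m304mul y z) = 0 := by
  ext i; fin_cases i <;> simp [m304mul]

/-- The algebras `M³₀₂`, `M³₀₃` and `M³₀₄` all satisfy the four Moufang identities. -/
theorem m302_m303_m304_isMoufang :
    MoufangMulOn m302mul ∧ MoufangMulOn m303mul ∧ MoufangMulOn m304mul :=
  ⟨.of_mul_mul_eq_zero m302mul_mul_left m302mul_mul_right,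
    .of_mul_mul_eq_zero m303mul_mul_left m303mul_mul_right,
    .of_mul_mul_eq_zero m304mul_mul_left m304mul_mul_right⟩
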